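/- arXiv:2401.04401 — 5 statements merged into one kernel-verified Lean document; each statement's English description precedes it below -/
import Mathlib

section
/- Let Ω ⊂ ℍₛⁿ, let f : Ω → ℍ be path-slice with path-slice stem function F, let γ ∈ 𝒫(ℂⁿ, Ω), and let I, J ∈ 𝕊(Ω, γ) with I ≠ J. Then F(γ) = ((1, I), (1, J))⁻¹ · (f(γ^I(1)), f(γ^J(1)))ᵀ. -/
noncomputable section
open Quaternion Matrix

abbrev Hq := Quaternion ℝ

/-- The set of quaternionic imaginary units. -/
def Sph : Set Hq := {I | I ^ 2 = -1}

/-- `Ψ_i^I` applied to a single complex number: `x + y i ↦ x + y I`. -/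
def psi (I : Hq) (z : ℂ) : Hq := (z.re : Hq) + z.im • I

/-- `Ψ_i^I : ℂⁿ → ℂ_Iⁿ`, componentwise. -/
def liftMap {n : ℕ} (I : Hq) (z : Fin n → ℂ) : Fin n → Hq := fun k => psi I (z k)

/-- The weakly slice cone `Hqₛⁿ = ⋃_{I∈𝕊} ℂ_Iⁿ`. -/
def HSn (n : ℕ) : Set (Fin n → Hq) := {q | ∃ I ∈ Sph, ∃ z : Fin n → ℂ, q = liftMap I z}

/-- A point of `ℂⁿ` is real. -/
def isRealPt {n : ℕ} (z : Fin n → ℂ) : Prop := ∀ k, (z k).im = 0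

/-- A point of `Hqⁿ` is real. -/
def isRealH {n : ℕ} (q : Fin n → Hq) : Prop := ∀ k, q k = ((q k).re : Hq)

/-- The lifted path `γ^I = Ψ_i^I ∘ γ`. -/
def liftP {n : ℕ} (γ : C(unitInterval, Fin n → ℂ)) (I : Hq) (t : unitInterval) : Fin n → Hq :=
  liftMap I (γ t)

/-- `𝕊(Ω, γ) = {I ∈ 𝕊 : γ^I ⊂ Ω}`. -/
def SUnits {n : ℕ} (Ω : Set (Fin n → Hq)) (γ : C(unitInterval, Fin n → ℂ)) : Set Hq :=
  {I | I ∈ Sph ∧ ∀ t, liftP γ I t ∈ Ω}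

/-- `𝒫(ℂⁿ, Ω)`: continuous paths starting in `ℝⁿ` with some lift inside `Ω`. -/
def PathsTo {n : ℕ} (Ω : Set (Fin n → Hq)) : Set C(unitInterval, Fin n → ℂ) :=
  {γ | isRealPt (γ 0) ∧ ∃ I, I ∈ SUnits Ω γ}

/-- `F` is a path-slice stem function of `f` on `Ω`:
`f(γ^I(1)) = (1, I)·F(γ)`. -/
def IsStem {n : ℕ} (Ω : Set (Fin n → Hq)) (f : (Fin n → Hq) → Hq)
    (F : C(unitInterval, Fin n → ℂ) → Fin 2 → Hq) : Prop :=
  ∀ γ ∈ PathsTo Ω, ∀ I ∈ SUnits Ω γ, f (liftP γ I 1) = F γ 0 + I * F γ 1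

/-- `f` is path-slice on `Ω`. -/
def IsPathSlice {n : ℕ} (Ω : Set (Fin n → Hq)) (f : (Fin n → Hq) → Hq) : Prop :=
  ∃ F, IsStem Ω f F

/-- `Ω` is real-path-connected. -/
def RealPathConnected {n : ℕ} (Ω : Set (Fin n → Hq)) : Prop :=
  ∀ q ∈ Ω, ∃ γ ∈ PathsTo Ω, ∃ I ∈ SUnits Ω γ, liftP γ I 1 = q

/-- `Ω₂` is `Ω₁`-stem-preserving: (i) every path of `𝒫(ℂⁿ,Ω₁)` has at least two
units in `𝕊(Ω₂,γ)`; (ii) two paths with the same endpoint share `≠ 1` units. -/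
def StemPreserving {n : ℕ} (Ω₁ Ω₂ : Set (Fin n → Hq)) : Prop :=
  (∀ γ ∈ PathsTo Ω₁, ∃ I ∈ SUnits Ω₂ γ, ∃ J ∈ SUnits Ω₂ γ, I ≠ J) ∧
  (∀ α ∈ PathsTo Ω₁, ∀ β ∈ PathsTo Ω₁, α 1 = β 1 →
    ∀ I ∈ SUnits Ω₂ α ∩ SUnits Ω₂ β, ∃ J ∈ SUnits Ω₂ α ∩ SUnits Ω₂ β, J ≠ I)

/-- The formula `((1,I),(1,J))⁻¹ (f(γ^I(1)), f(γ^J(1)))ᵀ`. -/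
def stemFormula {n : ℕ} (f : (Fin n → Hq) → Hq) (γ : C(unitInterval, Fin n → ℂ)) (I J : Hq) :
    Fin 2 → Hq :=
  ((I - J)⁻¹ • !![I, -J; (1 : Hq), -1]).mulVec ![f (liftP γ I 1), f (liftP γ J 1)]

/-- The sub-stem function `F_{Ω₁}^f` (depends only on `Ω₂` and `f`). -/
noncomputable def subStem {n : ℕ} (Ω₂ : Set (Fin n → Hq)) (f : (Fin n → Hq) → Hq)
    (γ : C(unitInterval, Fin n → ℂ)) : Fin 2 → Hq := by
  classical
  exact if h : ∃ p : Hq × Hq, p.1 ∈ SUnits Ω₂ γ ∧ p.2 ∈ SUnits Ω₂ γ ∧ p.1 ≠ p.2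
    then stemFormula f γ h.choose.1 h.choose.2
    else 0

/-- Normalized imaginary part of a quaternion. -/
def imUnit (a : Hq) : Hq := (‖a - (a.re : Hq)‖)⁻¹ • (a - (a.re : Hq))

/-- The map `𝔍 : Hqₛⁿ → 𝕊 ∪ {0}`. -/
noncomputable def Jmap {n : ℕ} (q : Fin n → Hq) : Hq := by
  classical
  exact if h : ∃ k : Fin n, q k ≠ ((q k).re : Hq) then
    imUnit (q ((Finset.univ.filter fun k => q k ≠ ((q k).re : Hq)).min'
      ⟨h.choose, Finset.mem_filter.2 ⟨Finset.mem_univ _, h.choose_spec⟩⟩))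
  else 0

/-- Componentwise complex conjugate of a path. -/
def conjPath {n : ℕ} (γ : C(unitInterval, Fin n → ℂ)) : C(unitInterval, Fin n → ℂ) :=
  ⟨fun t k => star (γ t k),
    continuous_pi fun k => continuous_star.comp ((continuous_apply k).comp γ.continuous)⟩

/-- The point-form sub-stem function `ℱ_{Ω₁}^f : Ω₁ → Hq^{2×1}`. -/
noncomputable def pointStem {n : ℕ} (Ω₁ Ω₂ : Set (Fin n → Hq)) (f : (Fin n → Hq) → Hq)
    (q : Fin n → Hq) : Fin 2 → Hq := by
  classical
  exact if isRealH q then ![f q, 0]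
    else if h : ∃ γ, γ ∈ PathsTo Ω₁ ∧ (∀ t, liftP γ (Jmap q) t ∈ Ω₁) ∧ liftP γ (Jmap q) 1 = q
    then subStem Ω₂ f h.choose
    else 0

/-- The `*`-product of functions: `(f*g)(q) = (f(q), 𝔍(q)f(q)) · ℱ_{Ω₁}^g(q)`. -/
noncomputable def starProd {n : ℕ} (Ω₁ Ω₂ : Set (Fin n → Hq)) (f g : (Fin n → Hq) → Hq)
    (q : Fin n → Hq) : Hq :=
  f q * pointStem Ω₁ Ω₂ g q 0 + (Jmap q * f q) * pointStem Ω₁ Ω₂ g q 1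

/-- The `*`-product on `Hq^{2×1}` coming from `Hq ⊗_ℝ ℂ`. -/
def vstar (p q : Fin 2 → Hq) : Fin 2 → Hq :=
  ![p 0 * q 0 - p 1 * q 1, p 1 * q 0 + p 0 * q 1]

/-- `Ω` is slice-open: a subset of `Hqₛⁿ` all of whose slices are open. -/
def SliceOpen {n : ℕ} (Ω : Set (Fin n → Hq)) : Prop :=
  Ω ⊆ HSn n ∧ ∀ I ∈ Sph, IsOpen {z : Fin n → ℂ | liftMap I z ∈ Ω}

/-- `Ω` is slice-connected. -/
def SliceConnected {n : ℕ} (Ω : Set (Fin n → Hq)) : Prop :=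
  ∀ U V : Set (Fin n → Hq), SliceOpen U → SliceOpen V → Ω ⊆ U ∪ V →
    (Ω ∩ U).Nonempty → (Ω ∩ V).Nonempty → (Ω ∩ U ∩ V).Nonempty

/-- `Ω` is a slice-domain. -/
def SliceDomain {n : ℕ} (Ω : Set (Fin n → Hq)) : Prop :=
  SliceOpen Ω ∧ SliceConnected Ω

/-- `Ω` is self-stem-preserving. -/
def SelfStemPreserving {n : ℕ} (Ω : Set (Fin n → Hq)) : Prop :=
  RealPathConnected Ω ∧ StemPreserving Ω Ω

/-- `Ω` is open in the Euclidean subspace topology of `Hqₛⁿ`. -/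
def EuclideanOpenIn {n : ℕ} (Ω : Set (Fin n → Hq)) : Prop :=
  ∃ U : Set (Fin n → Hq), IsOpen U ∧ Ω = U ∩ HSn n

/-- `Ω` is weakly axially symmetric. -/
def WeaklyAxiallySymmetric {n : ℕ} (Ω : Set (Fin n → Hq)) : Prop :=
  ∀ (x y : Fin n → ℝ) (I : Hq), I ∈ Sph →
    (fun k => (x k : Hq) + y k • I) ∈ Ω → (fun k => (x k : Hq) - y k • I) ∈ Ω

-- The `y`-terms cancel in `I (x + I y) - J (x + J y)` because `I² = J²`.
theorem mulVec_eq_sub_smul_of_add_mul {R : Type*} [Ring R] {I J x y : R} (hsq : I ^ 2 = J ^ 2) :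
    !![I, -J; 1, -1] *ᵥ ![x + I * y, x + J * y] = (I - J) • ![x, y] := by
  ext i
  fin_cases i <;> simp only [mulVec, dotProduct, Fin.sum_univ_two, of_apply, cons_val',
    cons_val_zero, cons_val_one, cons_val_fin_one, Pi.smul_apply, smul_eq_mul, Fin.zero_eta,
    Fin.mk_one]
  · rw [mul_add, mul_add, ← mul_assoc, ← mul_assoc, ← sq, neg_mul J J, ← sq, hsq]
    noncomm_ring
  · noncomm_ring

theorem eq_inv_sub_smul_mulVec_of_add_mul {R : Type*} [DivisionRing R] {I J x y a b : R}
    (hIJ : I ≠ J) (hsq : I ^ 2 = J ^ 2) (ha : a = x + I * y) (hb : b = x + J * y) :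
    ![x, y] = ((I - J)⁻¹ • !![I, -J; 1, -1]) *ᵥ ![a, b] := by
  rw [smul_mulVec, ha, hb, mulVec_eq_sub_smul_of_add_mul hsq, smul_smul,
    inv_mul_cancel₀ (sub_ne_zero.mpr hIJ), one_smul]

/-- a stem function is computed from `f` by
`F(γ) = ((1,I),(1,J))⁻¹ (f(γ^I(1)), f(γ^J(1)))ᵀ` for distinct `I, J ∈ 𝕊(Ω,γ)`. -/
theorem stem_eq_stemFormula {n : ℕ} (Ω : Set (Fin n → Hq)) (f : (Fin n → Hq) → Hq)
    (F : C(unitInterval, Fin n → ℂ) → Fin 2 → Hq) (hF : IsStem Ω f F)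
    (γ : C(unitInterval, Fin n → ℂ)) (hγ : γ ∈ PathsTo Ω)
    (I J : Hq) (hI : I ∈ SUnits Ω γ) (hJ : J ∈ SUnits Ω γ) (hIJ : I ≠ J) :
    F γ = stemFormula f γ I J := by
  have hsq : I ^ 2 = J ^ 2 := hI.1.trans hJ.1.symm
  calc F γ = ![F γ 0, F γ 1] := (FinVec.etaExpand_eq (F γ)).symm
    _ = stemFormula f γ I J :=
      eq_inv_sub_smul_mulVec_of_add_mul hIJ hsq (hF γ hγ I hI) (hF γ hγ J hJ)
end
end

section
/- Let Ω ⊂ ℍₛⁿ, let f : Ω → ℍ be path-slice with stem function F, and let α, β ∈ 𝒫(ℂⁿ, Ω) with α(1) = β(1). If 𝕊(Ω, α) ∩ 𝕊(Ω, β) contains at least two elements, then F(α) = F(β). -/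
noncomputable section
open Quaternion Matrix

theorem eq_of_add_mul_eq_of_ne {R : Type*} [Ring R] [NoZeroDivisors R] {I J : R}
    (hIJ : I ≠ J) {u v : Fin 2 → R} (hI : u 0 + I * u 1 = v 0 + I * v 1)
    (hJ : u 0 + J * u 1 = v 0 + J * v 1) : u = v := by
  have hdiff : (I - J) * (u 1 - v 1) =
      (u 0 + I * u 1 - (v 0 + I * v 1)) - (u 0 + J * u 1 - (v 0 + J * v 1)) := by
    noncomm_ring
  rw [hI, hJ, sub_self, sub_self, sub_self] at hdiff
  have h1 : u 1 = v 1 :=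
    sub_eq_zero.mp ((mul_eq_zero.mp hdiff).resolve_left (sub_ne_zero.mpr hIJ))
  have h0 : u 0 = v 0 := add_right_cancel (h1 ▸ hI)
  ext k
  fin_cases k
  exacts [h0, h1]

/-- if `α(1) = β(1)` and `𝕊(Ω,α) ∩ 𝕊(Ω,β)` has at least two elements,
then `F(α) = F(β)` for any stem function `F` of a path-slice `f`. -/
theorem stem_coincide_of_same_endpoint {n : ℕ} (Ω : Set (Fin n → Hq))
    (f : (Fin n → Hq) → Hq) (F : C(unitInterval, Fin n → ℂ) → Fin 2 → Hq)
    (hF : IsStem Ω f F) (α β : C(unitInterval, Fin n → ℂ))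
    (hα : α ∈ PathsTo Ω) (hβ : β ∈ PathsTo Ω) (hend : α 1 = β 1)
    (I J : Hq) (hI : I ∈ SUnits Ω α ∩ SUnits Ω β) (hJ : J ∈ SUnits Ω α ∩ SUnits Ω β)
    (hIJ : I ≠ J) :
    F α = F β := by
  have hlift : ∀ K, liftP α K 1 = liftP β K 1 := fun K => by rw [liftP, liftP, hend]
  refine eq_of_add_mul_eq_of_ne hIJ ?_ ?_
  · rw [← hF α hα I hI.1, ← hF β hβ I hI.2, hlift]
  · rw [← hF α hα J hJ.1, ← hF β hβ J hJ.2, hlift]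
end
end

section
/- Let Ω₁ ⊂ ℍₛⁿ be real-path-connected, Ω₂ ⊂ ℍₛⁿ be Ω₁-stem-preserving, and f : Ω₂ → ℍ path-slice. Then the formula F_{Ω₁}^f(γ) := ((1, I), (1, J))⁻¹ · (f(γ^I(1)), f(γ^J(1)))ᵀ, for any distinct I, J ∈ 𝕊(Ω₂, γ), is independent of the choice of I and J, hence defines a function F_{Ω₁}^f : 𝒫(ℂⁿ, Ω₁) → ℍ^{2×1}. -/
noncomputable section
open Quaternion Matrix

/- Since `f` is path-slice with stem `F`, every unit `K ∈ 𝕊(Ω₂, γ)` gives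
`f(γ^K(1)) = F(γ)₀ + K F(γ)₁`; two distinct units stack into the system
`[[1, K], [1, L]] F(γ) = (f(γ^K(1)), f(γ^L(1)))ᵀ`. The matrix of `stemFormula` is a left inverse
of `[[1, K], [1, L]]` because `K² = L²`, so every choice of `K ≠ L` returns `F(γ)`. -/

theorem inv_sub_smul_mul_eq_one {R : Type*} [DivisionRing R] {K L : R} (hKL : K ≠ L)
    (hsq : K * K = L * L) :
    (K - L)⁻¹ • !![K, -L; 1, -1] * !![1, K; 1, L] = 1 := by
  have hne : K - L ≠ 0 := sub_ne_zero.mpr hKL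
  rw [Matrix.smul_mul, Matrix.mul_fin_two]
  ext i j
  fin_cases i <;> fin_cases j <;> simp [hsq, ← sub_eq_add_neg, inv_mul_cancel₀ hne]

theorem stemFormula_eq_of_isStem {n : ℕ} {Ω : Set (Fin n → Hq)} {f : (Fin n → Hq) → Hq}
    {F : C(unitInterval, Fin n → ℂ) → Fin 2 → Hq} (hF : IsStem Ω f F)
    {γ : C(unitInterval, Fin n → ℂ)} (hγ : γ ∈ PathsTo Ω) {K L : Hq}
    (hK : K ∈ SUnits Ω γ) (hL : L ∈ SUnits Ω γ) (hKL : K ≠ L) :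
    stemFormula f γ K L = F γ := by
  have hsq : K * K = L * L := by rw [← sq, ← sq, hK.1, hL.1]
  have hsystem : ![f (liftP γ K 1), f (liftP γ L 1)] = !![1, K; 1, L] *ᵥ F γ := by
    rw [Matrix.mulVec_fin_two, hF γ hγ K hK, hF γ hγ L hL]
    simp
  rw [stemFormula, hsystem, Matrix.mulVec_mulVec, inv_sub_smul_mul_eq_one hKL hsq,
    Matrix.one_mulVec]

theorem subStem_eq_of_isStem {n : ℕ} {Ω : Set (Fin n → Hq)} {f : (Fin n → Hq) → Hq}
    {F : C(unitInterval, Fin n → ℂ) → Fin 2 → Hq} (hF : IsStem Ω f F)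
    {γ : C(unitInterval, Fin n → ℂ)} (hγ : γ ∈ PathsTo Ω) {K L : Hq}
    (hK : K ∈ SUnits Ω γ) (hL : L ∈ SUnits Ω γ) (hKL : K ≠ L) :
    subStem Ω f γ = F γ := by
  have hpair : ∃ p : Hq × Hq, p.1 ∈ SUnits Ω γ ∧ p.2 ∈ SUnits Ω γ ∧ p.1 ≠ p.2 :=
    ⟨(K, L), hK, hL, hKL⟩
  obtain ⟨hK', hL', hKL'⟩ := hpair.choose_spec
  rw [subStem, dif_pos hpair, stemFormula_eq_of_isStem hF hγ hK' hL' hKL']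

theorem subStem_well_defined_general {n : ℕ} (Ω₁ Ω₂ : Set (Fin n → Hq))
    (f : (Fin n → Hq) → Hq) (hf : IsPathSlice Ω₂ f)
    (γ : C(unitInterval, Fin n → ℂ)) (hγ : γ ∈ PathsTo Ω₁)
    (I J I' J' : Hq) (hI : I ∈ SUnits Ω₂ γ) (hJ : J ∈ SUnits Ω₂ γ)
    (hI' : I' ∈ SUnits Ω₂ γ) (hJ' : J' ∈ SUnits Ω₂ γ)
    (hIJ : I ≠ J) (hIJ' : I' ≠ J') :
    stemFormula f γ I J = stemFormula f γ I' J' ∧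
    subStem Ω₂ f γ = stemFormula f γ I J := by
  obtain ⟨F, hF⟩ := hf
  have hγ₂ : γ ∈ PathsTo Ω₂ := ⟨hγ.1, I, hI⟩
  rw [stemFormula_eq_of_isStem hF hγ₂ hI hJ hIJ, stemFormula_eq_of_isStem hF hγ₂ hI' hJ' hIJ',
    subStem_eq_of_isStem hF hγ₂ hI hJ hIJ]
  exact ⟨rfl, rfl⟩

/-- the formula defining the sub-stem function `F_{Ω₁}^f` is
independent of the choice of distinct `I, J ∈ 𝕊(Ω₂, γ)`, hence well-defined. -/
theorem subStem_well_defined {n : ℕ} (Ω₁ Ω₂ : Set (Fin n → Hq))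
    (h₁ : RealPathConnected Ω₁) (h₂ : StemPreserving Ω₁ Ω₂)
    (f : (Fin n → Hq) → Hq) (hf : IsPathSlice Ω₂ f)
    (γ : C(unitInterval, Fin n → ℂ)) (hγ : γ ∈ PathsTo Ω₁)
    (I J I' J' : Hq) (hI : I ∈ SUnits Ω₂ γ) (hJ : J ∈ SUnits Ω₂ γ)
    (hI' : I' ∈ SUnits Ω₂ γ) (hJ' : J' ∈ SUnits Ω₂ γ)
    (hIJ : I ≠ J) (hIJ' : I' ≠ J') :
    stemFormula f γ I J = stemFormula f γ I' J' ∧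
    subStem Ω₂ f γ = stemFormula f γ I J :=
  subStem_well_defined_general Ω₁ Ω₂ f hf γ hγ I J I' J' hI hJ hI' hJ' hIJ hIJ'
end
end

section
/- Let Ω₁ ⊂ ℍₛⁿ be real-path-connected, Ω₂ Ω₁-stem-preserving, and f : Ω₂ → ℍ path-slice. Then the point function ℱ_{Ω₁}^f : Ω₁ → ℍ^{2×1}, defined as F_{Ω₁}^f(γ) for any γ ∈ 𝒫(ℂⁿ, Ω₁) with γ^{𝔍(q)} ⊂ Ω₁ and γ^{𝔍(q)}(1) = q when q ∉ ℝⁿ, and as (f(q), 0)ᵀ when q ∈ ℝⁿ, is well-defined (independent of the choice of γ). -/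
noncomputable section
open Quaternion Matrix

/-! Since `𝔍(q)` is a unit and `Ψ^{𝔍(q)}` is injective, two admissible paths `γ₁`, `γ₂` end at the
same point of `ℂⁿ`. Running through `γ₁` and then back along `γ₂` gives a path of `𝒫(ℂⁿ, Ω₁)` whose
units are exactly those shared by `γ₁` and `γ₂`, so stem preservation yields units `I ≠ J` admissible
for both. Inverting `((1, I), (1, J))` recovers the stem function of `f` at either path from
`f(γ^I(1))` and `f(γ^J(1))`, which depend only on the common endpoint. -/

theorem mem_Sph_iff {I : Hq} : I ∈ Sph ↔ I.re = 0 ∧ normSq I = 1 := by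
  constructor
  · intro hI
    have hI' : I ^ 2 = -1 := hI
    have hnorm : normSq I = 1 := by
      have h := congrArg normSq hI'
      rw [map_pow, normSq_neg, map_one] at h
      exact (pow_eq_one_iff_of_nonneg normSq_nonneg two_ne_zero).mp h
    exact ⟨sq_eq_neg_normSq.mp (by rw [hI', hnorm]; simp), hnorm⟩
  · rintro ⟨hre, hnorm⟩
    show I ^ 2 = -1
    rw [sq_eq_neg_normSq.mpr hre, hnorm]
    simp

theorem mul_self_of_mem_Sph {I : Hq} (hI : I ∈ Sph) : I * I = -1 :=
  (sq I).symm.trans hI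

theorem ne_zero_of_mem_Sph {I : Hq} (hI : I ∈ Sph) : I ≠ 0 := by
  rintro rfl
  simpa using (mem_Sph_iff.mp hI).2

theorem imUnit_mem_Sph {a : Hq} (ha : a ≠ a.re) : imUnit a ∈ Sph := by
  have him : a.im ≠ 0 := by rwa [← sub_re_self, sub_ne_zero]
  have hnorm : ‖a.im‖ ≠ 0 := norm_ne_zero_iff.mpr him
  rw [imUnit, sub_re_self, mem_Sph_iff]
  refine ⟨by simp, ?_⟩
  rw [normSq_smul, normSq_eq_norm_mul_self]
  field_simp

theorem Jmap_mem_Sph {n : ℕ} {q : Fin n → Hq} (hq : ¬ isRealH q) : Jmap q ∈ Sph := by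
  classical
  have hex : ∃ k, q k ≠ (q k).re := by simpa [isRealH] using hq
  unfold Jmap
  rw [dif_pos hex]
  exact imUnit_mem_Sph
    (Finset.mem_filter.mp (Finset.min'_mem (Finset.univ.filter fun k => q k ≠ (q k).re) _)).2

theorem psi_injective {I : Hq} (hI : I ∈ Sph) : Function.Injective (psi I) := by
  intro z w h
  have hre : z.re = w.re := by
    simpa [psi, (mem_Sph_iff.mp hI).1] using congrArg (·.re) h
  rw [psi, psi, hre, add_right_inj] at h
  exact Complex.ext hre (smul_left_injective ℝ (ne_zero_of_mem_Sph hI) h)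

theorem liftMap_injective {n : ℕ} {I : Hq} (hI : I ∈ Sph) :
    Function.Injective (liftMap (n := n) I) :=
  fun _ _ h => funext fun k => psi_injective hI (congrFun h k)

theorem Matrix.inv_sub_smul_mulVec_of_mul_self_eq {D : Type*} [DivisionRing D] {I J : D} (hIJ : I ≠ J)
    (hsq : I * I = J * J) (x y : D) :
    ((I - J)⁻¹ • !![I, -J; 1, -1]) *ᵥ ![x + I * y, x + J * y] = ![x, y] := by
  rw [Matrix.smul_mulVec]
  ext i
  have hne : I - J ≠ 0 := sub_ne_zero.mpr hIJ
  fin_cases i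
  · have h : I * (x + I * y) + -(J * (x + J * y)) = (I - J) * x := by
      linear_combination (norm := noncomm_ring) hsq * y
    simp [dotProduct, h, inv_mul_cancel_left₀ hne]
  · have h : x + I * y + (-(J * y) + -x) = (I - J) * y := by noncomm_ring
    simp [dotProduct, h, inv_mul_cancel_left₀ hne]

section Stem

variable {n : ℕ} {Ω : Set (Fin n → Hq)} {f : (Fin n → Hq) → Hq}
  {F : C(unitInterval, Fin n → ℂ) → Fin 2 → Hq} {γ : C(unitInterval, Fin n → ℂ)} {I J : Hq}

theorem stemFormula_eq_of_isStem_s9 (hF : IsStem Ω f F) (hγ : isRealPt (γ 0))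
    (hI : I ∈ SUnits Ω γ) (hJ : J ∈ SUnits Ω γ) (hIJ : I ≠ J) :
    stemFormula f γ I J = F γ := by
  have hsq : I * I = J * J := by rw [mul_self_of_mem_Sph hI.1, mul_self_of_mem_Sph hJ.1]
  rw [stemFormula, hF γ ⟨hγ, I, hI⟩ I hI, hF γ ⟨hγ, I, hI⟩ J hJ,
    Matrix.inv_sub_smul_mulVec_of_mul_self_eq hIJ hsq]
  funext i
  fin_cases i <;> rfl

theorem subStem_eq_of_isStem_s9 (hF : IsStem Ω f F) (hγ : isRealPt (γ 0))
    (hI : I ∈ SUnits Ω γ) (hJ : J ∈ SUnits Ω γ) (hIJ : I ≠ J) :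
    subStem Ω f γ = F γ := by
  have hpair : ∃ p : Hq × Hq, p.1 ∈ SUnits Ω γ ∧ p.2 ∈ SUnits Ω γ ∧ p.1 ≠ p.2 :=
    ⟨(I, J), hI, hJ, hIJ⟩
  unfold subStem
  rw [dif_pos hpair]
  obtain ⟨hI', hJ', hIJ'⟩ := hpair.choose_spec
  exact stemFormula_eq_of_isStem_s9 hF hγ hI' hJ' hIJ'

theorem stemFormula_congr_endpoint {α β : C(unitInterval, Fin n → ℂ)} (h : α 1 = β 1) :
    stemFormula f α I J = stemFormula f β I J := by
  simp only [stemFormula, liftP, h]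

theorem mem_SUnits_iff_range_subset :
    I ∈ SUnits Ω γ ↔ I ∈ Sph ∧ Set.range γ ⊆ liftMap I ⁻¹' Ω := by
  rw [Set.range_subset_iff]
  rfl

theorem SUnits_eq_inter_of_range_eq_union {α β : C(unitInterval, Fin n → ℂ)}
    (h : Set.range γ = Set.range α ∪ Set.range β) :
    SUnits Ω γ = SUnits Ω α ∩ SUnits Ω β := by
  ext I
  simp only [Set.mem_inter_iff, mem_SUnits_iff_range_subset, h, Set.union_subset_iff]
  tauto

end Stem

theorem ContinuousMap.exists_range_eq_union_of_apply_one_eq {X : Type*} [TopologicalSpace X]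
    {α β : C(unitInterval, X)} (h : α 1 = β 1) :
    ∃ δ : C(unitInterval, X), δ 0 = α 0 ∧ Set.range δ = Set.range α ∪ Set.range β := by
  let a : Path (α 0) (α 1) := ⟨α, rfl, rfl⟩
  let b : Path (β 0) (α 1) := ⟨β, rfl, h.symm⟩
  refine ⟨(a.trans b.symm).toContinuousMap, (a.trans b.symm).source, ?_⟩
  exact (Path.trans_range a b.symm).trans (by rw [Path.symm_range]; rfl)

theorem subStem_eq_of_liftP_one_eq {n : ℕ} {Ω₁ Ω₂ : Set (Fin n → Hq)} {f : (Fin n → Hq) → Hq}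
    (h₂ : StemPreserving Ω₁ Ω₂) (hf : IsPathSlice Ω₂ f) {α β : C(unitInterval, Fin n → ℂ)}
    (hα : isRealPt (α 0)) (hβ : isRealPt (β 0)) {I : Hq}
    (hαI : I ∈ SUnits Ω₁ α) (hβI : I ∈ SUnits Ω₁ β) (hend : liftP α I 1 = liftP β I 1) :
    subStem Ω₂ f α = subStem Ω₂ f β := by
  obtain ⟨F, hF⟩ := hf
  have hend' : α 1 = β 1 := liftMap_injective hαI.1 hend
  obtain ⟨δ, hδ0, hδ⟩ := ContinuousMap.exists_range_eq_union_of_apply_one_eq hend'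
  have hδI : I ∈ SUnits Ω₁ δ := by rw [SUnits_eq_inter_of_range_eq_union hδ]; exact ⟨hαI, hβI⟩
  obtain ⟨J, hJ, K, hK, hJK⟩ := h₂.1 δ ⟨hδ0 ▸ hα, I, hδI⟩
  rw [SUnits_eq_inter_of_range_eq_union hδ] at hJ hK
  calc subStem Ω₂ f α = stemFormula f α J K :=
        (subStem_eq_of_isStem_s9 hF hα hJ.1 hK.1 hJK).trans
          (stemFormula_eq_of_isStem_s9 hF hα hJ.1 hK.1 hJK).symm
    _ = stemFormula f β J K := stemFormula_congr_endpoint hend'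
    _ = subStem Ω₂ f β :=
        (stemFormula_eq_of_isStem_s9 hF hβ hJ.2 hK.2 hJK).trans
          (subStem_eq_of_isStem_s9 hF hβ hJ.2 hK.2 hJK).symm

theorem pointStem_well_defined_general {n : ℕ} (Ω₁ Ω₂ : Set (Fin n → Hq))
    (h₂ : StemPreserving Ω₁ Ω₂)
    (f : (Fin n → Hq) → Hq) (hf : IsPathSlice Ω₂ f)
    (q : Fin n → Hq) (hqr : ¬ isRealH q)
    (γ₁ γ₂ : C(unitInterval, Fin n → ℂ))
    (hγ₁ : γ₁ ∈ PathsTo Ω₁) (hγ₂ : γ₂ ∈ PathsTo Ω₁)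
    (h₁' : (∀ t, liftP γ₁ (Jmap q) t ∈ Ω₁) ∧ liftP γ₁ (Jmap q) 1 = q)
    (h₂' : (∀ t, liftP γ₂ (Jmap q) t ∈ Ω₁) ∧ liftP γ₂ (Jmap q) 1 = q) :
    subStem Ω₂ f γ₁ = subStem Ω₂ f γ₂ ∧
    pointStem Ω₁ Ω₂ f q = subStem Ω₂ f γ₁ := by
  have hq := Jmap_mem_Sph hqr
  have key : ∀ α β : C(unitInterval, Fin n → ℂ), α ∈ PathsTo Ω₁ → β ∈ PathsTo Ω₁ →
      ((∀ t, liftP α (Jmap q) t ∈ Ω₁) ∧ liftP α (Jmap q) 1 = q) →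
      ((∀ t, liftP β (Jmap q) t ∈ Ω₁) ∧ liftP β (Jmap q) 1 = q) →
      subStem Ω₂ f α = subStem Ω₂ f β := fun α β hα hβ hα' hβ' =>
    subStem_eq_of_liftP_one_eq h₂ hf hα.1 hβ.1 ⟨hq, hα'.1⟩ ⟨hq, hβ'.1⟩ (hα'.2.trans hβ'.2.symm)
  have hex : ∃ γ, γ ∈ PathsTo Ω₁ ∧ (∀ t, liftP γ (Jmap q) t ∈ Ω₁) ∧ liftP γ (Jmap q) 1 = q :=
    ⟨γ₁, hγ₁, h₁'⟩
  refine ⟨key γ₁ γ₂ hγ₁ hγ₂ h₁' h₂', ?_⟩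
  unfold pointStem
  rw [if_neg hqr, dif_pos hex]
  exact key _ γ₁ hex.choose_spec.1 hγ₁ hex.choose_spec.2 h₁'

/-- the point function `ℱ_{Ω₁}^f` is well-defined: for a non-real
`q ∈ Ω₁`, `F_{Ω₁}^f(γ)` does not depend on the choice of path `γ` with
`γ^{𝔍(q)} ⊂ Ω₁` and `γ^{𝔍(q)}(1) = q`, and `ℱ_{Ω₁}^f(q)` equals this value. -/
theorem pointStem_well_defined {n : ℕ} (Ω₁ Ω₂ : Set (Fin n → Hq))
    (h₁ : RealPathConnected Ω₁) (h₂ : StemPreserving Ω₁ Ω₂)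
    (f : (Fin n → Hq) → Hq) (hf : IsPathSlice Ω₂ f)
    (q : Fin n → Hq) (hq : q ∈ Ω₁) (hqr : ¬ isRealH q)
    (γ₁ γ₂ : C(unitInterval, Fin n → ℂ))
    (hγ₁ : γ₁ ∈ PathsTo Ω₁) (hγ₂ : γ₂ ∈ PathsTo Ω₁)
    (h₁' : (∀ t, liftP γ₁ (Jmap q) t ∈ Ω₁) ∧ liftP γ₁ (Jmap q) 1 = q)
    (h₂' : (∀ t, liftP γ₂ (Jmap q) t ∈ Ω₁) ∧ liftP γ₂ (Jmap q) 1 = q) :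
    subStem Ω₂ f γ₁ = subStem Ω₂ f γ₂ ∧
    pointStem Ω₁ Ω₂ f q = subStem Ω₂ f γ₁ :=
  pointStem_well_defined_general Ω₁ Ω₂ h₂ f hf q hqr γ₁ γ₂ hγ₁ hγ₂ h₁' h₂'
end
end

section
/- Let Ω₁ be real-path-connected, Ω₂ Ω₁-stem-preserving, f : Ω₂ → ℍ path-slice, and γ ∈ 𝒫(ℂⁿ, Ω₁). Then F_{Ω₁}^f(γ) = diag(1, −1) · F_{Ω₁}^f(γ̄), where γ̄ is the componentwise complex conjugate path. -/
noncomputable section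
open Quaternion Matrix

/-! Conjugating a path and negating the unit leave the lifted path unchanged,
`γ̄^{-I} = γ^I`. Hence `γ ↦ diag(1, -1) · F(γ̄)` is again a stem function of `f` whenever `F`
is, and a stem function is determined on every path with two distinct units. -/

lemma psi_neg_star (I : Hq) (z : ℂ) : psi (-I) (star z) = psi I z := by
  simp [psi, smul_neg]

lemma liftP_conjPath_neg {n : ℕ} (γ : C(unitInterval, Fin n → ℂ)) (I : Hq) (t : unitInterval) :
    liftP (conjPath γ) (-I) t = liftP γ I t :=
  funext fun k => psi_neg_star I (γ t k)

lemma neg_mem_SUnits_conjPath {n : ℕ} {Ω : Set (Fin n → Hq)} {γ : C(unitInterval, Fin n → ℂ)}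
    {I : Hq} (hI : I ∈ SUnits Ω γ) : -I ∈ SUnits Ω (conjPath γ) := by
  refine ⟨?_, fun t => ?_⟩
  · simpa [Sph, neg_sq] using hI.1
  · simpa only [liftP_conjPath_neg] using hI.2 t

lemma conjPath_mem_PathsTo {n : ℕ} {Ω : Set (Fin n → Hq)} {γ : C(unitInterval, Fin n → ℂ)}
    (hγ : γ ∈ PathsTo Ω) : conjPath γ ∈ PathsTo Ω := by
  obtain ⟨hreal, I, hI⟩ := hγ
  refine ⟨fun k => ?_, -I, neg_mem_SUnits_conjPath hI⟩
  simp [conjPath, hreal k]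

lemma stemFormula_eq {n : ℕ} {f : (Fin n → Hq) → Hq} {γ : C(unitInterval, Fin n → ℂ)}
    {I J : Hq} (v : Fin 2 → Hq) (hsq : I ^ 2 = J ^ 2) (hIJ : I ≠ J)
    (hI : f (liftP γ I 1) = v 0 + I * v 1) (hJ : f (liftP γ J 1) = v 0 + J * v 1) :
    stemFormula f γ I J = v := by
  have hne : I - J ≠ 0 := sub_ne_zero.mpr hIJ
  have hcancel (x : Hq) : (I - J)⁻¹ * ((I - J) * x) = x := by
    rw [← mul_assoc, inv_mul_cancel₀ hne, one_mul]
  funext i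
  fin_cases i <;>
    simp only [stemFormula, mulVec, dotProduct, Fin.sum_univ_two, Matrix.smul_apply, smul_eq_mul,
      of_apply, cons_val', cons_val_zero, cons_val_one, empty_val', cons_val_fin_one, hI, hJ]
  · calc (I - J)⁻¹ * I * (v 0 + I * v 1) + (I - J)⁻¹ * -J * (v 0 + J * v 1)
        = (I - J)⁻¹ * ((I - J) * v 0 + (I ^ 2 - J ^ 2) * v 1) := by noncomm_ring
      _ = v 0 := by rw [hsq, sub_self, zero_mul, add_zero, hcancel]
  · calc (I - J)⁻¹ * 1 * (v 0 + I * v 1) + (I - J)⁻¹ * -1 * (v 0 + J * v 1)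
        = (I - J)⁻¹ * ((I - J) * v 1) := by noncomm_ring
      _ = v 1 := hcancel _

lemma IsStem.subStem_eq {n : ℕ} {Ω : Set (Fin n → Hq)} {f : (Fin n → Hq) → Hq}
    {F : C(unitInterval, Fin n → ℂ) → Fin 2 → Hq} (hF : IsStem Ω f F)
    {γ : C(unitInterval, Fin n → ℂ)} (hγ : γ ∈ PathsTo Ω) {I J : Hq}
    (hI : I ∈ SUnits Ω γ) (hJ : J ∈ SUnits Ω γ) (hIJ : I ≠ J) :
    subStem Ω f γ = F γ := by
  have hpair : ∃ p : Hq × Hq, p.1 ∈ SUnits Ω γ ∧ p.2 ∈ SUnits Ω γ ∧ p.1 ≠ p.2 :=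
    ⟨(I, J), hI, hJ, hIJ⟩
  obtain ⟨hA, hB, hAB⟩ := hpair.choose_spec
  rw [subStem, dif_pos hpair]
  exact stemFormula_eq (F γ) (hA.1.trans hB.1.symm) hAB (hF γ hγ _ hA) (hF γ hγ _ hB)

lemma IsStem.conjPath {n : ℕ} {Ω : Set (Fin n → Hq)} {f : (Fin n → Hq) → Hq}
    {F : C(unitInterval, Fin n → ℂ) → Fin 2 → Hq} (hF : IsStem Ω f F) :
    IsStem Ω f fun γ => diagonal ![(1 : Hq), -1] *ᵥ F (conjPath γ) := by
  intro γ hγ I hI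
  rw [← liftP_conjPath_neg, hF _ (conjPath_mem_PathsTo hγ) _ (neg_mem_SUnits_conjPath hI)]
  simp [mulVec_diagonal]

theorem subStem_conjPath_general {n : ℕ} (Ω₁ Ω₂ : Set (Fin n → Hq))
    (h₂ : StemPreserving Ω₁ Ω₂)
    (f : (Fin n → Hq) → Hq) (hf : IsPathSlice Ω₂ f)
    (γ : C(unitInterval, Fin n → ℂ)) (hγ : γ ∈ PathsTo Ω₁) :
    subStem Ω₂ f γ =
      (Matrix.diagonal ![(1 : Hq), -1]).mulVec (subStem Ω₂ f (conjPath γ)) := by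
  obtain ⟨F, hF⟩ := hf
  obtain ⟨I, hI, J, hJ, hIJ⟩ := h₂.1 γ hγ
  have hγ₂ : γ ∈ PathsTo Ω₂ := ⟨hγ.1, I, hI⟩
  have hconj : subStem Ω₂ f (conjPath γ) = F (conjPath γ) :=
    hF.subStem_eq (conjPath_mem_PathsTo hγ₂) (neg_mem_SUnits_conjPath hI)
      (neg_mem_SUnits_conjPath hJ) (neg_injective.ne hIJ)
  rw [hconj]
  exact hF.conjPath.subStem_eq hγ₂ hI hJ hIJ

/-- `F_{Ω₁}^f(γ) = diag(1,−1) · F_{Ω₁}^f(γ̄)`. -/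
theorem subStem_conjPath {n : ℕ} (Ω₁ Ω₂ : Set (Fin n → Hq))
    (h₁ : RealPathConnected Ω₁) (h₂ : StemPreserving Ω₁ Ω₂)
    (f : (Fin n → Hq) → Hq) (hf : IsPathSlice Ω₂ f)
    (γ : C(unitInterval, Fin n → ℂ)) (hγ : γ ∈ PathsTo Ω₁) :
    subStem Ω₂ f γ =
      (Matrix.diagonal ![(1 : Hq), -1]).mulVec (subStem Ω₂ f (conjPath γ)) :=
  subStem_conjPath_general Ω₁ Ω₂ h₂ f hf γ hγ
end
end
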